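/- arXiv:2312.04925 — 2 statements merged into one kernel-verified Lean document; each statement's English description precedes it below -/
import Mathlib

section
/- Hermitian inertia bound: Let G be a finite simple graph on n vertices and let A be a Hermitian weighted adjacency matrix of G. Then α(G) ≤ n_{≥0}(A), the number of non-negative eigenvalues of A counted with multiplicity. -/
/-!
The Hermitian form `x ↦ ⟪x, A x⟫` vanishes on the coordinate subspace spanned by an independent
set `s`, since `A` is zero on `s × s`. It is negative definite on the orthogonal complement of the
span of the eigenvectors with non-negative eigenvalues, so that complement meets the coordinate
subspace only in `0`, and a dimension count gives `|s| ≤ n_{≥0}(A)`.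
-/

open Matrix Finset
open scoped InnerProductSpace

namespace EuclideanSpace

variable {𝕜 ι : Type*} [RCLike 𝕜] [Fintype ι]

theorem finrank_span_basisFun (s : Finset ι) :
    Module.finrank 𝕜 (Submodule.span 𝕜 (Set.range fun i : s => basisFun ι 𝕜 i)) = #s :=
  (finrank_span_eq_card ((basisFun ι 𝕜).orthonormal.linearIndependent.comp _
    Subtype.val_injective)).trans (Fintype.card_coe s)

theorem apply_eq_zero_of_mem_span_basisFun [DecidableEq ι] {s : Finset ι}
    {x : EuclideanSpace 𝕜 ι}
    (hx : x ∈ Submodule.span 𝕜 (Set.range fun i : s => basisFun ι 𝕜 i)) {j : ι} (hj : j ∉ s) :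
    x j = 0 := by
  induction hx using Submodule.span_induction with
  | mem _ hy =>
    obtain ⟨i, rfl⟩ := hy
    simp [ne_of_mem_of_not_mem i.2 hj]
  | zero => rfl
  | add _ _ _ _ hy hz => simp [hy, hz]
  | smul _ _ _ hy => simp [hy]

end EuclideanSpace

namespace Matrix

variable {𝕜 ι : Type*} [RCLike 𝕜] [Fintype ι] [DecidableEq ι]

theorem inner_toEuclideanLin_self_eq_zero {A : Matrix ι ι 𝕜} {s : Finset ι}
    (hA : ∀ i ∈ s, ∀ j ∈ s, A i j = 0) {x : EuclideanSpace 𝕜 ι} (hx : ∀ j ∉ s, x j = 0) :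
    ⟪x, toEuclideanLin A x⟫_𝕜 = 0 := by
  have hAx : ∀ i ∈ s, (A *ᵥ x.ofLp) i = 0 := fun i hi =>
    Finset.sum_eq_zero fun j _ => by
      by_cases hj : j ∈ s
      · simp [hA i hi j hj]
      · simp [hx j hj]
  refine Finset.sum_eq_zero fun i _ => ?_
  by_cases hi : i ∈ s
  · simp [toLpLin_apply, hAx i hi]
  · simp [hx i hi]

namespace IsHermitian

variable {A : Matrix ι ι 𝕜} (hA : A.IsHermitian)

theorem toEuclideanLin_eigenvectorBasis (i : ι) :
    toEuclideanLin A (hA.eigenvectorBasis i) = (hA.eigenvalues i : 𝕜) • hA.eigenvectorBasis i := by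
  rw [toLpLin_apply, hA.mulVec_eigenvectorBasis, RCLike.real_smul_eq_coe_smul (K := 𝕜)]
  rfl

theorem re_inner_toEuclideanLin_self (x : EuclideanSpace 𝕜 ι) :
    RCLike.re ⟪x, toEuclideanLin A x⟫_𝕜 =
      ∑ i, hA.eigenvalues i * ‖⟪hA.eigenvectorBasis i, x⟫_𝕜‖ ^ 2 := by
  rw [← hA.eigenvectorBasis.sum_inner_mul_inner, map_sum]
  refine Finset.sum_congr rfl fun i _ => ?_
  rw [← isSymmetric_toEuclideanLin_iff.mpr hA, toEuclideanLin_eigenvectorBasis, inner_smul_left,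
    RCLike.conj_ofReal, ← inner_conj_symm x, mul_left_comm, RCLike.conj_mul, ← RCLike.ofReal_pow,
    RCLike.re_ofReal_mul, RCLike.ofReal_re]

noncomputable def nonnegEigenspan : Submodule 𝕜 (EuclideanSpace 𝕜 ι) :=
  Submodule.span 𝕜 (Set.range fun i : {i // 0 ≤ hA.eigenvalues i} => hA.eigenvectorBasis i)

theorem finrank_nonnegEigenspan :
    Module.finrank 𝕜 hA.nonnegEigenspan = Fintype.card {i // 0 ≤ hA.eigenvalues i} :=
  finrank_span_eq_card
    (hA.eigenvectorBasis.orthonormal.linearIndependent.comp _ Subtype.val_injective)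

theorem re_inner_toEuclideanLin_self_neg {x : EuclideanSpace 𝕜 ι}
    (hx : x ∈ hA.nonnegEigenspanᗮ) (hx₀ : x ≠ 0) :
    RCLike.re ⟪x, toEuclideanLin A x⟫_𝕜 < 0 := by
  have hcoeff {i} (hi : 0 ≤ hA.eigenvalues i) : ⟪hA.eigenvectorBasis i, x⟫_𝕜 = 0 :=
    Submodule.inner_right_of_mem_orthogonal
      (Submodule.subset_span (Set.mem_range_self (⟨i, hi⟩ : {i // 0 ≤ hA.eigenvalues i}))) hx
  have hterm (i) : hA.eigenvalues i * ‖⟪hA.eigenvectorBasis i, x⟫_𝕜‖ ^ 2 ≤ 0 := by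
    rcases le_or_gt 0 (hA.eigenvalues i) with hi | hi
    · simp [hcoeff hi]
    · exact mul_nonpos_of_nonpos_of_nonneg hi.le (sq_nonneg _)
  obtain ⟨i, hi⟩ : ∃ i, ⟪hA.eigenvectorBasis i, x⟫_𝕜 ≠ 0 := by
    contrapose! hx₀
    rw [← hA.eigenvectorBasis.sum_repr' x]
    simp [hx₀]
  rw [hA.re_inner_toEuclideanLin_self]
  refine Finset.sum_neg' (fun i _ => hterm i) ⟨i, Finset.mem_univ _, ?_⟩
  exact mul_neg_of_neg_of_pos (not_le.mp (mt hcoeff hi)) (by positivity)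

theorem finrank_le_card_nonneg_eigenvalues {W : Submodule 𝕜 (EuclideanSpace 𝕜 ι)}
    (hW : ∀ x ∈ W, 0 ≤ RCLike.re ⟪x, toEuclideanLin A x⟫_𝕜) :
    Module.finrank 𝕜 W ≤ Fintype.card {i // 0 ≤ hA.eigenvalues i} := by
  have hdisj : Disjoint W hA.nonnegEigenspanᗮ := by
    rw [Submodule.disjoint_def]
    intro x hxW hx
    by_contra hx₀
    exact (hW x hxW).not_gt (hA.re_inner_toEuclideanLin_self_neg hx hx₀)
  have := Submodule.finrank_add_finrank_le_of_disjoint hdisj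
  rw [← hA.nonnegEigenspan.finrank_add_finrank_orthogonal, finrank_nonnegEigenspan] at this
  omega

end IsHermitian

end Matrix

/-- **Hermitian inertia bound.** If `A` is a Hermitian weighted adjacency matrix of an
`n`-vertex graph `G`, then the independence number of `G` is at most the number of
non-negative eigenvalues of `A`, counted with multiplicity. -/
theorem hermitian_inertia_bound (n : ℕ) (G : SimpleGraph (Fin n)) (A : Matrix (Fin n) (Fin n) ℂ)
    (hA : A.IsHermitian) (hsupp : ∀ i j, ¬ G.Adj i j → A i j = 0)
    (s : Finset (Fin n)) (hs : ∀ i ∈ s, ∀ j ∈ s, ¬ G.Adj i j) :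
    s.card ≤ Fintype.card {i : Fin n // 0 ≤ hA.eigenvalues i} := by
  rw [← EuclideanSpace.finrank_span_basisFun (𝕜 := ℂ)]
  refine hA.finrank_le_card_nonneg_eigenvalues fun x hx => ?_
  rw [inner_toEuclideanLin_self_eq_zero (fun i hi j hj => hsupp i j (hs i hi j hj))
    fun j hj => EuclideanSpace.apply_eq_zero_of_mem_span_basisFun hx hj, map_zero]
end

section
/- Let G be a finite simple graph on n vertices of girth at least 5, and let B be a Hermitian weighted adjacency matrix of G such that every row of B has L² norm 1, i.e. Σ_{j=1}^n |B_{ij}|² = 1 for all i ∈ {1,…,n}. Then n_{≥0}(B) ≥ n/4. -/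
open Matrix Finset

/-- A graph is `C4`-free if it has no cycle of length 4 as a (not necessarily induced)
subgraph: there are no four pairwise distinct vertices `a, b, c, d` with
`ab`, `bc`, `cd`, `da` all edges. -/
def C4Free {V : Type*} (G : SimpleGraph V) : Prop :=
  ∀ a b c d : V, a ≠ b → a ≠ c → a ≠ d → b ≠ c → b ≠ d → c ≠ d →
    G.Adj a b → G.Adj b c → G.Adj c d → ¬ G.Adj d a

/-!
Let `μ` be the eigenvalues of `B`. Then `∑ μ = tr B = 0`, `∑ μ² = tr B² = n` by the row
normalisation, `∑ μ³ = tr B³ = 0` because `G` has no triangles, and `∑ μ⁴ = ‖B²‖²_F ≤ 2n`: the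
diagonal entries of `B²` are `1`, and since two distinct vertices have at most one common
neighbour, each `(B²)ᵢⱼ` with `i ≠ j` is a single product `Bᵢₖ Bₖⱼ`, so the off-diagonal part of a
row of `B²` has squared norm at most `∑ₖ |Bᵢₖ|² ∑ⱼ |Bₖⱼ|² = 1`.
The quartic `p(x) = 2x⁴ + √2x³ - 8x² - 6√2x + 16` is nonnegative and at least `16` for `x ≤ 0`,
so `16 · #{μ < 0} ≤ ∑ p(μ) = 2∑ μ⁴ - 8n + 16n ≤ 12n`.
-/

theorem quartic_nonneg (x : ℝ) : 0 ≤ 2 * x ^ 4 + √2 * x ^ 3 - 8 * x ^ 2 - 6 * √2 * x + 16 := by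
  have hs : √2 ^ 2 = 2 := Real.sq_sqrt (by norm_num)
  have key : 8 * (2 * x ^ 4 + √2 * x ^ 3 - 8 * x ^ 2 - 6 * √2 * x + 16) =
      (x - √2) ^ 2 * ((4 * x + 5 * √2) ^ 2 + 14) := by
    linear_combination (39 * x ^ 2 + 10 * √2 * x - 25 * √2 ^ 2 - 64) * hs
  have : 0 ≤ (x - √2) ^ 2 * ((4 * x + 5 * √2) ^ 2 + 14) := by positivity
  linarith

theorem sixteen_le_quartic_of_nonpos {x : ℝ} (hx : x ≤ 0) :
    16 ≤ 2 * x ^ 4 + √2 * x ^ 3 - 8 * x ^ 2 - 6 * √2 * x + 16 := by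
  have hs : √2 ^ 2 = 2 := Real.sq_sqrt (by norm_num)
  have key : 2 * x ^ 4 + √2 * x ^ 3 - 8 * x ^ 2 - 6 * √2 * x =
      x * (2 * x - 3 * √2) * (x + √2) ^ 2 := by
    linear_combination (4 * x ^ 2 + 3 * √2 * x) * hs
  have hfactor : 0 ≤ x * (2 * x - 3 * √2) :=
    mul_nonneg_of_nonpos_of_nonpos hx (by linarith [Real.sqrt_nonneg 2])
  linarith [mul_nonneg hfactor (sq_nonneg (x + √2))]

theorem card_div_four_le_card_nonneg_of_moments {ι : Type*} [Fintype ι] (μ : ι → ℝ)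
    (h1 : ∑ i, μ i = 0) (h2 : ∑ i, μ i ^ 2 = Fintype.card ι) (h3 : ∑ i, μ i ^ 3 = 0)
    (h4 : ∑ i, μ i ^ 4 ≤ 2 * Fintype.card ι) :
    (Fintype.card ι : ℝ) / 4 ≤ Fintype.card {i // 0 ≤ μ i} := by
  classical
  have hpoint (i : ι) : 16 - 16 * (if 0 ≤ μ i then 1 else 0) ≤
      2 * μ i ^ 4 + √2 * μ i ^ 3 - 8 * μ i ^ 2 - 6 * √2 * μ i + 16 := by
    split_ifs with h
    · simpa using quartic_nonneg (μ i)
    · simpa using sixteen_le_quartic_of_nonpos (le_of_not_ge h)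
  have hsum := Finset.sum_le_sum fun i (_ : i ∈ univ) => hpoint i
  simp only [Finset.sum_sub_distrib, Finset.sum_add_distrib, ← Finset.mul_sum, Finset.sum_boole,
    Finset.sum_const, card_univ, nsmul_eq_mul, h1, h2, h3] at hsum
  rw [Fintype.card_subtype]
  linarith

namespace Matrix.IsHermitian
variable {𝕜 n : Type*} [RCLike 𝕜] [Fintype n] {A : Matrix n n 𝕜}

theorem trace_pow_eq_sum_eigenvalues_pow [DecidableEq n] (hA : A.IsHermitian) (k : ℕ) :
    (A ^ k).trace = ∑ i, (hA.eigenvalues i : 𝕜) ^ k := by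
  conv_lhs => rw [hA.spectral_theorem, ← map_pow, Unitary.conjStarAlgAut_apply, trace_mul_cycle,
    Unitary.coe_star_mul_self, one_mul, diagonal_pow, trace_diagonal]
  rfl

theorem sum_eigenvalues_pow_eq_re_trace [DecidableEq n] (hA : A.IsHermitian) (k : ℕ) :
    ∑ i, hA.eigenvalues i ^ k = RCLike.re (A ^ k).trace := by
  rw [hA.trace_pow_eq_sum_eigenvalues_pow]
  simp only [map_sum, ← RCLike.ofReal_pow, RCLike.ofReal_re]

theorem mul_self_apply_self (hA : A.IsHermitian) (i : n) :
    (A * A) i i = ((∑ j, ‖A i j‖ ^ 2 : ℝ) : 𝕜) := by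
  simp only [mul_apply, RCLike.ofReal_sum, RCLike.ofReal_pow, ← RCLike.mul_conj]
  refine Finset.sum_congr rfl fun j _ => ?_
  rw [← hA.apply i j, RCLike.star_def, RCLike.conj_conj]

theorem re_trace_mul_self (hA : A.IsHermitian) :
    RCLike.re (A * A).trace = ∑ i, ∑ j, ‖A i j‖ ^ 2 := by
  simp only [trace, diag_apply, hA.mul_self_apply_self, map_sum, RCLike.ofReal_re]

end Matrix.IsHermitian

theorem SimpleGraph.eq_of_adj_of_adj_of_C4Free {V : Type*} {G : SimpleGraph V}
    (hC3 : ∀ a b c, G.Adj a b → G.Adj b c → ¬ G.Adj c a) (hC4 : C4Free G)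
    {i j k l : V} (hij : i ≠ j) (hik : G.Adj i k) (hkj : G.Adj k j) (hil : G.Adj i l)
    (hlj : G.Adj l j) : k = l := by
  by_contra hkl
  by_cases hadj : G.Adj i j
  · exact hC3 i k j hik hkj hadj.symm
  · exact hC4 i k j l hik.ne hij hil.ne hkj.ne hkl hlj.ne.symm hik hkj hlj.symm hil.symm

theorem norm_sq_sum_le_sum_norm_sq_of_subsingleton {ι E : Type*} [Fintype ι]
    [SeminormedAddCommGroup E] {f : ι → E} (hf : (Function.support f).Subsingleton) :
    ‖∑ k, f k‖ ^ 2 ≤ ∑ k, ‖f k‖ ^ 2 := by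
  classical
  rcases hf.eq_empty_or_singleton with hempty | ⟨k, hk⟩
  · simp [Function.support_eq_empty_iff.mp hempty]
  · rw [Finset.sum_eq_single k (fun l _ hl => Function.notMem_support.mp (hk ▸ hl)) (by simp)]
    exact Finset.single_le_sum (fun l _ => sq_nonneg ‖f l‖) (Finset.mem_univ k)

/-- `B` is a weighted adjacency matrix of `G` (its diagonal vanishes since `G` is loopless). -/
def Matrix.IsSupportedOn {V R : Type*} [Zero R] (B : Matrix V V R) (G : SimpleGraph V) : Prop :=
  ∀ i j, ¬ G.Adj i j → B i j = 0

namespace Matrix.IsSupportedOn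
variable {V : Type*} {G : SimpleGraph V}

theorem adj_of_ne_zero {R : Type*} [Zero R] {B : Matrix V V R} (hB : B.IsSupportedOn G) {i j : V}
    (h : B i j ≠ 0) : G.Adj i j :=
  not_not.mp fun hn => h (hB i j hn)

variable [Fintype V]

theorem trace_eq_zero {R : Type*} [AddCommMonoid R] {B : Matrix V V R} (hB : B.IsSupportedOn G) :
    B.trace = 0 :=
  Finset.sum_eq_zero fun i _ => hB i i (G.irrefl)

theorem trace_pow_three_eq_zero {R : Type*} [Semiring R] [DecidableEq V] {B : Matrix V V R}
    (hB : B.IsSupportedOn G) (hC3 : ∀ a b c, G.Adj a b → G.Adj b c → ¬ G.Adj c a) :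
    (B ^ 3).trace = 0 := by
  simp only [pow_three, trace, diag_apply, mul_apply, Finset.mul_sum]
  refine Finset.sum_eq_zero fun i _ => Finset.sum_eq_zero fun j _ =>
    Finset.sum_eq_zero fun k _ => ?_
  by_contra h
  exact hC3 i j k (hB.adj_of_ne_zero (left_ne_zero_of_mul h))
    (hB.adj_of_ne_zero (left_ne_zero_of_mul (right_ne_zero_of_mul h)))
    (hB.adj_of_ne_zero (right_ne_zero_of_mul (right_ne_zero_of_mul h)))

variable {𝕜 : Type*} [RCLike 𝕜] {B : Matrix V V 𝕜}

theorem norm_sq_mul_self_apply_le (hB : B.IsSupportedOn G)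
    (hC3 : ∀ a b c, G.Adj a b → G.Adj b c → ¬ G.Adj c a) (hC4 : C4Free G) {i j : V} (hij : i ≠ j) :
    ‖(B * B) i j‖ ^ 2 ≤ ∑ k, ‖B i k‖ ^ 2 * ‖B k j‖ ^ 2 := by
  have hpath : (Function.support fun k => B i k * B k j).Subsingleton := fun k hk l hl =>
    G.eq_of_adj_of_adj_of_C4Free hC3 hC4 hij
      (hB.adj_of_ne_zero (left_ne_zero_of_mul hk)) (hB.adj_of_ne_zero (right_ne_zero_of_mul hk))
      (hB.adj_of_ne_zero (left_ne_zero_of_mul hl)) (hB.adj_of_ne_zero (right_ne_zero_of_mul hl))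
  simpa only [mul_apply, norm_mul, mul_pow] using norm_sq_sum_le_sum_norm_sq_of_subsingleton hpath

theorem sum_norm_sq_mul_self_apply_le_two [DecidableEq V] (hB : B.IsSupportedOn G)
    (hH : B.IsHermitian) (hC3 : ∀ a b c, G.Adj a b → G.Adj b c → ¬ G.Adj c a) (hC4 : C4Free G)
    (hnorm : ∀ i, ∑ j, ‖B i j‖ ^ 2 = 1) (i : V) :
    ∑ j, ‖(B * B) i j‖ ^ 2 ≤ 2 := by
  have hdiag : ‖(B * B) i i‖ ^ 2 = 1 := by simp [hH.mul_self_apply_self, hnorm]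
  have hoff : ∑ j ∈ univ.erase i, ‖(B * B) i j‖ ^ 2 ≤ 1 :=
    calc ∑ j ∈ univ.erase i, ‖(B * B) i j‖ ^ 2
        ≤ ∑ j ∈ univ.erase i, ∑ k, ‖B i k‖ ^ 2 * ‖B k j‖ ^ 2 :=
          Finset.sum_le_sum fun j hj =>
            hB.norm_sq_mul_self_apply_le hC3 hC4 (Finset.ne_of_mem_erase hj).symm
      _ ≤ ∑ j, ∑ k, ‖B i k‖ ^ 2 * ‖B k j‖ ^ 2 :=
          Finset.sum_le_sum_of_subset_of_nonneg (Finset.erase_subset _ _) fun _ _ _ => by positivity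
      _ = 1 := by rw [Finset.sum_comm]; simp only [← Finset.mul_sum, hnorm, mul_one]
  rw [← Finset.add_sum_erase _ _ (Finset.mem_univ i), hdiag]
  linarith

end Matrix.IsSupportedOn

/-- If `G` is a graph on `n` vertices of girth at least 5 (no cycles of length 3 or 4) and
`B` is a Hermitian weighted adjacency matrix of `G` each of whose rows has `L²` norm `1`,
then `B` has at least `n/4` non-negative eigenvalues. -/
theorem inertia_bound_girth_five_normalized (n : ℕ) (G : SimpleGraph (Fin n))
    (hC3 : ∀ a b c : Fin n, G.Adj a b → G.Adj b c → ¬ G.Adj c a)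
    (hC4 : C4Free G)
    (B : Matrix (Fin n) (Fin n) ℂ) (hB : B.IsHermitian)
    (hsupp : ∀ i j, ¬ G.Adj i j → B i j = 0)
    (hnorm : ∀ i, ∑ j, ‖B i j‖ ^ 2 = 1) :
    (n : ℝ) / 4 ≤ (Fintype.card {i : Fin n // 0 ≤ hB.eigenvalues i} : ℝ) := by
  have hBG : B.IsSupportedOn G := hsupp
  have h1 : ∑ i, hB.eigenvalues i = 0 := by
    simpa [hBG.trace_eq_zero] using hB.sum_eigenvalues_pow_eq_re_trace 1
  have h2 : ∑ i, hB.eigenvalues i ^ 2 = n := by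
    rw [hB.sum_eigenvalues_pow_eq_re_trace, pow_two, hB.re_trace_mul_self]
    simp [hnorm]
  have h3 : ∑ i, hB.eigenvalues i ^ 3 = 0 := by
    simp [hB.sum_eigenvalues_pow_eq_re_trace, hBG.trace_pow_three_eq_zero hC3]
  have h4 : ∑ i, hB.eigenvalues i ^ 4 ≤ 2 * n := by
    rw [hB.sum_eigenvalues_pow_eq_re_trace, show B ^ 4 = B ^ 2 * B ^ 2 by rw [← pow_add],
      (hB.pow 2).re_trace_mul_self, pow_two]
    calc ∑ i, ∑ j, ‖(B * B) i j‖ ^ 2 ≤ ∑ _i : Fin n, (2 : ℝ) :=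
          Finset.sum_le_sum fun i _ => hBG.sum_norm_sq_mul_self_apply_le_two hB hC3 hC4 hnorm i
      _ = 2 * n := by simp [mul_comm]
  simpa using card_div_four_le_card_nonneg_of_moments hB.eigenvalues h1 (by simpa) h3 (by simpa)
end
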